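/- arXiv:0908.0116 — 2 statements merged into one kernel-verified Lean document; each statement's English description precedes it below -/
import Mathlib

section
/- For a cosimplicial unital ring R, equipped with the quasi-comonoid structure given by the Alexander–Whitney cup product x ∪ y = (∂^{m+1})^n x · (∂^0)^m y for x ∈ R^m, y ∈ R^n, the Maurer–Cartan set mc(R) = {ω ∈ R^1 : σ^0 ω = 1, ∂^1 ω = ω ∪ ω} is in natural bijection with the set 1 + {α ∈ N^1 R : dα + α ∪ α = 0}, where N R is the cosimplicial conormalization of R (so N^1 R = ker σ^0) and d = Σ(-1)^i ∂^i is the cochain differential. -/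
open CategoryTheory

section OneAdd

variable {A B : Type*} [Ring A] [Ring B]

theorem RingHom.map_one_add_eq_one_iff (f : A →+* B) (a : A) : f (1 + a) = 1 ↔ f a = 0 := by
  rw [map_add, map_one, add_eq_left]

theorem RingHom.map_one_add_eq_mul_iff (d₀ d₁ d₂ : A →+* B) (a : A) :
    d₁ (1 + a) = d₂ (1 + a) * d₀ (1 + a) ↔ (d₀ a - d₁ a + d₂ a) + d₂ a * d₀ a = 0 := by
  have key : d₂ (1 + a) * d₀ (1 + a) - d₁ (1 + a) = (d₀ a - d₁ a + d₂ a) + d₂ a * d₀ a := by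
    simp only [map_add, map_one]
    noncomm_ring
  rw [eq_comm, ← sub_eq_zero, key]

end OneAdd

theorem maurer_cartan_of_cosimplicial_ring (R : CosimplicialObject RingCat) :
    ∃ e : {α : R.obj (SimplexCategory.mk 1) //
            R.σ (0 : Fin 1) α = 0 ∧
            (R.δ (0 : Fin 3) α - R.δ (1 : Fin 3) α + R.δ (2 : Fin 3) α)
              + (R.δ (2 : Fin 3) α) * (R.δ (0 : Fin 3) α) = 0} ≃
          {ω : R.obj (SimplexCategory.mk 1) //
            R.σ (0 : Fin 1) ω = 1 ∧
            R.δ (1 : Fin 3) ω = (R.δ (2 : Fin 3) ω) * (R.δ (0 : Fin 3) ω)},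
      ∀ α, ((e α : R.obj (SimplexCategory.mk 1))) = 1 + (α : R.obj (SimplexCategory.mk 1)) :=
  ⟨(Equiv.addLeft 1).subtypeEquiv fun α =>
      and_congr ((R.σ 0).hom.map_one_add_eq_one_iff α).symm
        ((R.δ 0).hom.map_one_add_eq_mul_iff (R.δ 1).hom (R.δ 2).hom α).symm,
    fun _ => rfl⟩
end

section
/- Let G be a cosimplicial simplicial group arising as G = C^•(X, H) for a simplicial set X and a simplicial group H, i.e. C^n(X,H)_m = H_m^{X_n} with cosimplicial operations induced by the simplicial operations of X. Then the Maurer–Cartan set mc(G), consisting of families ω_n ∈ (G^{n+1})_n (elements of total degree matching) satisfying ∂_i ω_n = ∂^{i+1} ω_{n-1} for i > 0, ∂_0 ω_n = (∂^1 ω_{n-1})·(∂^0 ω_{n-1})^{-1}, σ_i ω_n = σ^{i+1} ω_{n+1}, and σ^0 ω_n = 1, is naturally isomorphic to Hom_{sSet}(X, W̄H). -/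
/-!
STATEMENT 16: Let `G = C•(X, H)` be the cosimplicial simplicial group of `H`-cochains on a
simplicial set `X` (`C^n(X,H)_m = H_m^{X_n}`).  Then the Maurer–Cartan set `mc(G)`,
consisting of families `ω_n ∈ (G^{n+1})_n` with
`∂_i ω_n = ∂^{i+1} ω_{n-1}` (`i > 0`), `∂_0 ω_n = (∂¹ω_{n-1})·(∂⁰ω_{n-1})⁻¹`,
`σ_i ω_n = σ^{i+1} ω_{n+1}`, and `σ⁰ ω_n = 1`, is naturally isomorphic to
`Hom_{sSet}(X, W̄H)`.
-/

universe u

/-- A simplicial set, by generators: faces `face n i : X (n+1) → X n` (`0 ≤ i ≤ n+1`) and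
degeneracies `degen n i : X n → X (n+1)` (`0 ≤ i ≤ n`) satisfying the simplicial
identities. -/
structure SimpSet (X : ℕ → Type u) where
  face : ∀ n i : ℕ, i ≤ n + 1 → X (n + 1) → X n
  degen : ∀ n i : ℕ, i ≤ n → X n → X (n + 1)
  face_face : ∀ (n i k : ℕ) (hik : i ≤ k) (hk : k ≤ n + 1) (x : X (n + 2)),
    face n i (by omega) (face (n + 1) (k + 1) (by omega) x) =
      face n k hk (face (n + 1) i (by omega) x)
  degen_degen : ∀ (n i j : ℕ) (hij : i ≤ j) (hj : j ≤ n) (x : X n),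
    degen (n + 1) i (by omega) (degen n j hj x) =
      degen (n + 1) (j + 1) (by omega) (degen n i (by omega) x)
  face_degen_lt : ∀ (n i k : ℕ) (hik : i ≤ k) (hk : k ≤ n) (x : X (n + 1)),
    face (n + 1) i (by omega) (degen (n + 1) (k + 1) (by omega) x) =
      degen n k (by omega) (face n i (by omega) x)
  face_degen_eq1 : ∀ (n i : ℕ) (hin : i ≤ n) (x : X n),
    face n i (by omega) (degen n i hin x) = x
  face_degen_eq2 : ∀ (n i : ℕ) (hin : i ≤ n) (x : X n),
    face n (i + 1) (by omega) (degen n i hin x) = x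
  face_degen_gt : ∀ (n j l : ℕ) (hjl : j + 1 ≤ l) (hl : l ≤ n + 1) (x : X (n + 1)),
    face (n + 1) (l + 1) (by omega) (degen (n + 1) j (by omega) x) =
      degen n j (by omega) (face n l (by omega) x)

/-- A simplicial group: a simplicial set of groups with all structure maps
homomorphisms. -/
structure SimpGrp (H : ℕ → Type u) [∀ n, Group (H n)] extends SimpSet H where
  face_mul : ∀ (n i : ℕ) (h : i ≤ n + 1) (x y : H (n + 1)),
    face n i h (x * y) = face n i h x * face n i h y
  degen_mul : ∀ (n i : ℕ) (h : i ≤ n) (x y : H n),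
    degen n i h (x * y) = degen n i h x * degen n i h y

variable {X : ℕ → Type u} {H : ℕ → Type u} [∀ n, Group (H n)]

/-- The Maurer–Cartan set of `C•(X, H)`: families `ω_n : X_{n+1} → H_n` satisfying the
Maurer–Cartan conditions of Definition `mcdefgp`. -/
def mcCochains (SX : SimpSet X) (SH : SimpGrp H) : Type u :=
  {ω : ∀ n, X (n + 1) → H n //
    -- `∂_i ω_n = ∂^{i+1} ω_{n-1}` for `i > 0`
    (∀ (m i : ℕ) (hi : 1 ≤ i) (h : i ≤ m + 1) (x : X (m + 2)),
      SH.face m i h (ω (m + 1) x) = ω m (SX.face (m + 1) (i + 1) (by omega) x)) ∧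
    -- `∂_0 ω_n = (∂¹ ω_{n-1}) · (∂⁰ ω_{n-1})⁻¹`
    (∀ (m : ℕ) (x : X (m + 2)),
      SH.face m 0 (by omega) (ω (m + 1) x) =
        ω m (SX.face (m + 1) 1 (by omega) x) * (ω m (SX.face (m + 1) 0 (by omega) x))⁻¹) ∧
    -- `σ_i ω_n = σ^{i+1} ω_{n+1}`
    (∀ (n i : ℕ) (h : i ≤ n) (x : X (n + 1)),
      SH.degen n i h (ω n x) = ω (n + 1) (SX.degen (n + 1) (i + 1) (by omega) x)) ∧
    -- `σ⁰ ω_n = 1`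
    (∀ (n : ℕ) (x : X n), ω n (SX.degen n 0 (by omega) x) = 1)}

/-- Level `n` of the classifying space `W̄H`: tuples `(g_{n-1}, …, g_0)` with
`g_j ∈ H_j`. -/
def Wbar (H : ℕ → Type u) (n : ℕ) : Type u := ∀ j : Fin n, H j

/-- Face maps of `W̄H`. -/
def WbarFace (SH : SimpGrp H) {n : ℕ} (i : ℕ) (hi : i ≤ n + 1)
    (v : Wbar H (n + 1)) : Wbar H n :=
  fun j =>
    if h1 : (j : ℕ) < n - i then v ⟨j, by omega⟩
    else if h2 : (j : ℕ) = n - i ∧ i ≤ n then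
      SH.face j 0 (by omega) (v ⟨(j : ℕ) + 1, by have := j.isLt; omega⟩) * v ⟨j, by omega⟩
    else
      SH.face j (i - (n - (j : ℕ))) (by have := j.isLt; omega)
        (v ⟨(j : ℕ) + 1, by have := j.isLt; omega⟩)

/-- Degeneracy maps of `W̄H`. -/
def WbarDegen (SH : SimpGrp H) {n : ℕ} (i : ℕ) (hi : i ≤ n)
    (v : Wbar H n) : Wbar H (n + 1) :=
  fun j =>
    if h1 : (j : ℕ) < n - i then
      cast (congrArg H rfl) (v ⟨j, by omega⟩)
    else if h2 : (j : ℕ) = n - i then (1 : H j)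
    else
      cast (congrArg H (by have := j.isLt; omega : (j : ℕ) - 1 + 1 = (j : ℕ)))
        (SH.degen ((j : ℕ) - 1) (i - (n - (j : ℕ)) - 1) (by have := j.isLt; omega)
          (v ⟨(j : ℕ) - 1, by have := j.isLt; omega⟩))

/-- The set of simplicial maps `X → W̄H`. -/
def mapsToWbar (SX : SimpSet X) (SH : SimpGrp H) : Type u :=
  {F : ∀ n, X n → Wbar H n //
    (∀ (n i : ℕ) (h : i ≤ n + 1) (x : X (n + 1)),
      F n (SX.face n i h x) = WbarFace SH i h (F (n + 1) x)) ∧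
    (∀ (n i : ℕ) (h : i ≤ n) (x : X n),
      F (n + 1) (SX.degen n i h x) = WbarDegen SH i h (F n x))}

/-!
A Maurer–Cartan element `ω` is a twisting function for `X`.  The map `X → W̄H` it classifies
sends `x ∈ X_n` to the tuple whose `j`-th entry is `ω_j` evaluated on the iterated back face
`d₀^{n-1-j} x ∈ X_{j+1}`; conversely a simplicial map `F` is determined by its top entries
`F(x)_n`, because the face formula of `W̄H` for `d₀` makes the lower entries of `F(x)` top
entries of `F` on iterated `d₀`-faces of `x`.  In the `j`-th entry of an `n`-simplex, a face
`d_i` with `i ≤ k = n-1-j` is absorbed by the iterated face (`d₀^k d_i = d₀^{k+1}`), so these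
identities hold for every `ω`; the remaining faces and the degeneracies are exactly the four
Maurer–Cartan conditions.
-/

def castIdx {A : ℕ → Type u} {a b : ℕ} (h : a = b) (x : A a) : A b :=
  cast (congrArg A h) x

namespace SimpSet

variable (S : SimpSet X)

lemma face_congr_idx {n a b : ℕ} (h : a = b) (ha : a ≤ n + 1) (hb : b ≤ n + 1)
    (x : X (n + 1)) : S.face n a ha x = S.face n b hb x := by
  subst h; rfl

lemma degen_congr_idx {n a b : ℕ} (h : a = b) (ha : a ≤ n) (hb : b ≤ n) (x : X n) :
    S.degen n a ha x = S.degen n b hb x := by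
  subst h; rfl

lemma face_zero_castIdx {a b : ℕ} (h : a = b) (h' : a + 1 = b + 1) (x : X (a + 1)) :
    S.face b 0 (Nat.zero_le _) (castIdx h' x) = castIdx h (S.face a 0 (Nat.zero_le _) x) := by
  subst h; rfl

def faceZeroIter : ∀ k m : ℕ, X (m + k) → X m
  | 0, _, x => x
  | k + 1, m, x => faceZeroIter k m (S.face (m + k) 0 (Nat.zero_le _) x)

lemma faceZeroIter_face_of_le :
    ∀ (k m i : ℕ), i ≤ k → ∀ (h : i ≤ m + k + 1) (x : X (m + k + 1)),
      S.faceZeroIter k m (S.face (m + k) i h x) = S.faceZeroIter (k + 1) m x := by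
  intro k
  induction k with
  | zero =>
    intro m i hik h x
    obtain rfl : i = 0 := by omega
    rfl
  | succ k ih =>
    intro m i hik h x
    rcases i with _ | i
    · rfl
    · show S.faceZeroIter k m (S.face (m + k) 0 _ (S.face (m + k + 1) (i + 1) _ x)) = _
      rw [S.face_face (m + k) 0 i (Nat.zero_le _) (by omega) x]
      exact ih m i (by omega) (by omega) _

lemma faceZeroIter_face_of_ge :
    ∀ (k m i : ℕ), k ≤ i → ∀ (h : i ≤ m + k + 1) (x : X (m + k + 1)),
      S.faceZeroIter k m (S.face (m + k) i h x) =
        S.face m (i - k) (by omega) (S.faceZeroIter k (m + 1) (castIdx (by omega) x)) := by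
  intro k
  induction k with
  | zero =>
    intro m i hik h x
    exact S.face_congr_idx (by omega) _ _ _
  | succ k ih =>
    intro m i hik h x
    obtain ⟨i, rfl⟩ : ∃ i', i = i' + 1 := ⟨i - 1, by omega⟩
    show S.faceZeroIter k m (S.face (m + k) 0 _ (S.face (m + k + 1) (i + 1) _ x)) =
      S.face m (i + 1 - (k + 1)) _
        (S.faceZeroIter k (m + 1) (S.face (m + 1 + k) 0 _ (castIdx _ x)))
    rw [S.face_face (m + k) 0 i (Nat.zero_le _) (by omega) x,
      ih m i (by omega) (by omega) _,
      S.face_zero_castIdx (by omega : m + k + 1 = m + 1 + k) (by omega) x]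
    exact S.face_congr_idx (by omega) _ _ _

lemma faceZeroIter_degen_of_le :
    ∀ (k m i : ℕ), i ≤ k → ∀ (h : i ≤ m + k) (x : X (m + k)),
      S.faceZeroIter (k + 1) m (S.degen (m + k) i h x) = S.faceZeroIter k m x := by
  intro k
  induction k with
  | zero =>
    intro m i hik h x
    obtain rfl : i = 0 := by omega
    exact congrArg (S.faceZeroIter 0 m) (S.face_degen_eq1 m 0 h x)
  | succ k ih =>
    intro m i hik h x
    show S.faceZeroIter (k + 1) m (S.face (m + k + 1) 0 _ (S.degen (m + k + 1) i _ x)) = _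
    rcases i with _ | i
    · rw [S.face_degen_eq1 (m + k + 1) 0 h x]
    · rw [S.face_degen_lt (m + k) 0 i (Nat.zero_le _) (by omega) x]
      exact ih m i (by omega) (by omega) _

lemma faceZeroIter_degen_of_ge :
    ∀ (k m i : ℕ), k ≤ i → ∀ (h : i ≤ m + k) (x : X (m + k)),
      S.faceZeroIter k (m + 1) (castIdx (by omega) (S.degen (m + k) i h x)) =
        S.degen m (i - k) (by omega) (S.faceZeroIter k m x) := by
  intro k
  induction k with
  | zero =>
    intro m i hik h x
    exact S.degen_congr_idx (by omega) _ _ _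
  | succ k ih =>
    intro m i hik h x
    obtain ⟨i, rfl⟩ : ∃ i', i = i' + 1 := ⟨i - 1, by omega⟩
    show S.faceZeroIter k (m + 1)
      (S.face (m + 1 + k) 0 _ (castIdx _ (S.degen (m + k + 1) (i + 1) _ x))) = _
    rw [S.face_zero_castIdx (by omega : m + k + 1 = m + 1 + k) (by omega),
      S.face_degen_lt (m + k) 0 i (Nat.zero_le _) (by omega) x,
      ih m i (by omega) (by omega) _]
    exact S.degen_congr_idx (by omega) _ _ _

lemma faceZeroIter_succ' (k m : ℕ) (x : X (m + k + 1)) :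
    S.faceZeroIter (k + 1) m x =
      S.face m 0 (Nat.zero_le _) (S.faceZeroIter k (m + 1) (castIdx (by omega) x)) := by
  rw [← S.faceZeroIter_face_of_le k m k le_rfl (by omega) x,
    S.faceZeroIter_face_of_ge k m k le_rfl (by omega) x]
  exact S.face_congr_idx (by omega) _ _ _

end SimpSet

section WbarEntries

variable (SH : SimpGrp H) {n : ℕ}

lemma wbarFace_apply_of_lt (i : ℕ) (hi : i ≤ n + 1) (v : Wbar H (n + 1)) (j : ℕ) (hj : j < n)
    (hc : j < n - i) : WbarFace SH i hi v ⟨j, hj⟩ = v ⟨j, by omega⟩ := by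
  rw [WbarFace, dif_pos hc]

lemma wbarFace_apply_of_eq (i : ℕ) (hi : i ≤ n) (v : Wbar H (n + 1)) (j : ℕ) (hj : j < n)
    (hc : j = n - i) :
    WbarFace SH i (by omega) v ⟨j, hj⟩ =
      SH.face j 0 (Nat.zero_le _) (v ⟨j + 1, by omega⟩) * v ⟨j, by omega⟩ := by
  rw [WbarFace, dif_neg (show ¬ j < n - i by omega), dif_pos ⟨hc, hi⟩]

lemma wbarFace_apply_of_gt (i : ℕ) (hi : i ≤ n + 1) (v : Wbar H (n + 1)) (j : ℕ) (hj : j < n)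
    (hc : n - i < j ∨ n < i) :
    WbarFace SH i hi v ⟨j, hj⟩ =
      SH.face j (i - (n - j)) (by omega) (v ⟨j + 1, by omega⟩) := by
  rw [WbarFace, dif_neg (show ¬ j < n - i by omega),
    dif_neg (show ¬ (j = n - i ∧ i ≤ n) by omega)]

lemma wbarDegen_apply_of_lt (i : ℕ) (hi : i ≤ n) (v : Wbar H n) (j : ℕ) (hj : j < n + 1)
    (hc : j < n - i) : WbarDegen SH i hi v ⟨j, hj⟩ = v ⟨j, by omega⟩ := by
  rw [WbarDegen, dif_pos hc]
  rfl

lemma wbarDegen_apply_of_eq (i : ℕ) (hi : i ≤ n) (v : Wbar H n) (j : ℕ) (hj : j < n + 1)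
    (hc : j = n - i) : WbarDegen SH i hi v ⟨j, hj⟩ = 1 := by
  rw [WbarDegen, dif_neg (show ¬ j < n - i by omega), dif_pos hc]

lemma wbarDegen_apply_of_gt (i : ℕ) (hi : i ≤ n) (v : Wbar H n) (j : ℕ) (hj : j + 1 < n + 1)
    (hc : n - i < j + 1) :
    WbarDegen SH i hi v ⟨j + 1, hj⟩ =
      SH.degen j (i - (n - (j + 1)) - 1) (by omega) (v ⟨j, by omega⟩) := by
  rw [WbarDegen, dif_neg (show ¬ j + 1 < n - i by omega),
    dif_neg (show ¬ j + 1 = n - i by omega)]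
  rfl

end WbarEntries

section ClassifyingMap

variable (SX : SimpSet X)

def classifyingMap {A : ℕ → Type u} (ω : ∀ n, X (n + 1) → A n) (n : ℕ) (x : X n) :
    Wbar A n :=
  fun j => ω j (SX.faceZeroIter (n - 1 - j) (j + 1) (castIdx (by have := j.isLt; omega) x))

lemma classifyingMap_apply {A : ℕ → Type u} (ω : ∀ n, X (n + 1) → A n) {n k j : ℕ}
    (h : n = j + 1 + k) (x : X n) (hj : j < n) :
    classifyingMap SX ω n x ⟨j, hj⟩ = ω j (SX.faceZeroIter k (j + 1) (castIdx h x)) := by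
  obtain rfl : k = n - 1 - j := by omega
  rfl

lemma classifyingMap_apply' {A : ℕ → Type u} (ω : ∀ n, X (n + 1) → A n) (k j : ℕ)
    (x : X (j + 1 + k)) (hj : j < j + 1 + k) :
    classifyingMap SX ω (j + 1 + k) x ⟨j, hj⟩ = ω j (SX.faceZeroIter k (j + 1) x) :=
  classifyingMap_apply SX ω rfl x hj

variable (SH : SimpGrp H) (ω : ∀ n, X (n + 1) → H n)

lemma classifyingMap_face
    (face_pos : ∀ (m i : ℕ), 1 ≤ i → ∀ (h : i ≤ m + 1) (x : X (m + 2)),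
      SH.face m i h (ω (m + 1) x) = ω m (SX.face (m + 1) (i + 1) (by omega) x))
    (face_zero : ∀ (m : ℕ) (x : X (m + 2)),
      SH.face m 0 (Nat.zero_le _) (ω (m + 1) x) =
        ω m (SX.face (m + 1) 1 (by omega) x) * (ω m (SX.face (m + 1) 0 (by omega) x))⁻¹)
    (n i : ℕ) (h : i ≤ n + 1) (x : X (n + 1)) :
    classifyingMap SX ω n (SX.face n i h x) =
      WbarFace SH i h (classifyingMap SX ω (n + 1) x) := by
  funext ⟨j, hj⟩
  obtain ⟨k, rfl⟩ : ∃ k, n = j + 1 + k := ⟨n - (j + 1), by omega⟩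
  have entry : classifyingMap SX ω (j + 1 + k + 1) x ⟨j, by omega⟩ =
      ω j (SX.faceZeroIter (k + 1) (j + 1) x) :=
    classifyingMap_apply' SX ω (k + 1) j x (by omega)
  have entry_succ : classifyingMap SX ω (j + 1 + k + 1) x ⟨j + 1, by omega⟩ =
      ω (j + 1) (SX.faceZeroIter k (j + 1 + 1) (castIdx (by omega) x)) :=
    classifyingMap_apply SX ω (by omega) x (by omega)
  rw [classifyingMap_apply' SX ω k j _ hj]
  rcases lt_trichotomy i (k + 1) with hik | rfl | hik
  · rw [wbarFace_apply_of_lt SH i h _ j hj (by omega), entry,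
      SX.faceZeroIter_face_of_le k (j + 1) i (by omega) (by omega) x]
  · rw [wbarFace_apply_of_eq SH (k + 1) (by omega) _ j hj (by omega), entry, entry_succ,
      SX.faceZeroIter_face_of_ge k (j + 1) (k + 1) (by omega) (by omega) x,
      SX.face_congr_idx (show k + 1 - k = 1 by omega) (by omega) (by omega),
      SX.faceZeroIter_succ' k (j + 1) x, face_zero, inv_mul_cancel_right]
  · rw [wbarFace_apply_of_gt SH i h _ j hj (by omega), entry_succ,
      SX.faceZeroIter_face_of_ge k (j + 1) i (by omega) (by omega) x,
      SX.face_congr_idx (show i - k = (i - k - 1) + 1 by omega) (by omega) (by omega),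
      ← face_pos j (i - k - 1) (by omega) (by omega)]
    exact SH.face_congr_idx (by omega) _ _ _

lemma classifyingMap_degen
    (degen_succ : ∀ (n i : ℕ) (h : i ≤ n) (x : X (n + 1)),
      SH.degen n i h (ω n x) = ω (n + 1) (SX.degen (n + 1) (i + 1) (by omega) x))
    (degen_zero : ∀ (n : ℕ) (x : X n), ω n (SX.degen n 0 (Nat.zero_le _) x) = 1)
    (n i : ℕ) (h : i ≤ n) (x : X n) :
    classifyingMap SX ω (n + 1) (SX.degen n i h x) =
      WbarDegen SH i h (classifyingMap SX ω n x) := by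
  funext ⟨j, hj⟩
  rcases lt_trichotomy j (n - i) with hc | hc | hc
  · obtain ⟨k, rfl⟩ : ∃ k, n = j + 1 + k := ⟨n - (j + 1), by omega⟩
    have entry : classifyingMap SX ω (j + 1 + k + 1) (SX.degen (j + 1 + k) i h x) ⟨j, hj⟩ =
        ω j (SX.faceZeroIter (k + 1) (j + 1) (SX.degen (j + 1 + k) i h x)) :=
      classifyingMap_apply' SX ω (k + 1) j _ hj
    rw [wbarDegen_apply_of_lt SH i h _ j hj hc, entry,
      SX.faceZeroIter_degen_of_le k (j + 1) i (by omega) (by omega) x,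
      classifyingMap_apply' SX ω k j x (by omega)]
  · obtain rfl : n = j + i := by omega
    rw [wbarDegen_apply_of_eq SH i h _ j hj hc,
      classifyingMap_apply SX ω (by omega : j + i + 1 = j + 1 + i) _ hj,
      SX.faceZeroIter_degen_of_ge i j i le_rfl (by omega) x,
      SX.degen_congr_idx (show i - i = 0 by omega) (by omega) (by omega)]
    exact degen_zero j _
  · obtain ⟨j, rfl⟩ : ∃ j', j = j' + 1 := ⟨j - 1, by omega⟩
    obtain ⟨k, rfl⟩ : ∃ k, n = j + 1 + k := ⟨n - (j + 1), by omega⟩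
    rw [wbarDegen_apply_of_gt SH i h _ j hj (by omega),
      classifyingMap_apply' SX ω k j x (by omega),
      classifyingMap_apply SX ω (by omega : j + 1 + k + 1 = j + 1 + 1 + k) _ hj,
      SX.faceZeroIter_degen_of_ge k (j + 1) i (by omega) (by omega) x,
      SX.degen_congr_idx (show i - k = i - k - 1 + 1 by omega) (by omega) (by omega),
      ← degen_succ j (i - k - 1) (by omega)]
    exact SH.degen_congr_idx (by omega) _ _ _

end ClassifyingMap

section TopEntries

def topEntries {A : ℕ → Type u} (F : ∀ n, X n → Wbar A n) (n : ℕ) (x : X (n + 1)) : A n :=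
  F (n + 1) x ⟨n, Nat.lt_succ_self n⟩

lemma topEntries_classifyingMap (SX : SimpSet X) {A : ℕ → Type u}
    (ω : ∀ n, X (n + 1) → A n) : topEntries (classifyingMap SX ω) = ω := by
  funext n x
  exact classifyingMap_apply' SX ω 0 n x (by omega)

variable (SX : SimpSet X) (SH : SimpGrp H) (F : ∀ n, X n → Wbar H n)

section Faces

variable (hf : ∀ (n i : ℕ) (h : i ≤ n + 1) (x : X (n + 1)),
    F n (SX.face n i h x) = WbarFace SH i h (F (n + 1) x))

include hf

lemma face_topEntries (m i : ℕ) (hi : 1 ≤ i) (h : i ≤ m + 1) (x : X (m + 2)) :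
    SH.face m i h (topEntries F (m + 1) x) =
      topEntries F m (SX.face (m + 1) (i + 1) (by omega) x) := by
  have e := congrFun (hf (m + 1) (i + 1) (by omega) x) ⟨m, by omega⟩
  rw [wbarFace_apply_of_gt SH (i + 1) (by omega) (F (m + 2) x) m (by omega) (by omega)] at e
  rw [topEntries, topEntries, e]
  exact SH.face_congr_idx (by omega) _ _ _

lemma face_zero_topEntries (m : ℕ) (x : X (m + 2)) :
    SH.face m 0 (Nat.zero_le _) (topEntries F (m + 1) x) =
      topEntries F m (SX.face (m + 1) 1 (by omega) x) *
        (topEntries F m (SX.face (m + 1) 0 (by omega) x))⁻¹ := by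
  have face_one := congrFun (hf (m + 1) 1 (by omega) x) ⟨m, by omega⟩
  have face_zero := congrFun (hf (m + 1) 0 (by omega) x) ⟨m, by omega⟩
  rw [wbarFace_apply_of_eq SH 1 (by omega) (F (m + 2) x) m (by omega) (by omega)] at face_one
  rw [wbarFace_apply_of_lt SH 0 (by omega) (F (m + 2) x) m (by omega) (by omega)] at face_zero
  rw [topEntries, topEntries, topEntries, face_one, face_zero, mul_inv_cancel_right]

lemma apply_eq_topEntries_faceZeroIter :
    ∀ (k j : ℕ) (x : X (j + 1 + k)) (hj : j < j + 1 + k),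
      F (j + 1 + k) x ⟨j, hj⟩ = topEntries F j (SX.faceZeroIter k (j + 1) x) := by
  intro k
  induction k with
  | zero => intro j x hj; rfl
  | succ k ih =>
    intro j x hj
    have e := congrFun (hf (j + 1 + k) 0 (Nat.zero_le _) x) ⟨j, by omega⟩
    rw [wbarFace_apply_of_lt SH 0 (Nat.zero_le _) _ j (by omega) (by omega)] at e
    exact e.symm.trans (ih j _ (by omega))

lemma classifyingMap_topEntries : classifyingMap SX (topEntries F) = F := by
  funext n x ⟨j, hj⟩
  obtain ⟨k, rfl⟩ : ∃ k, n = j + 1 + k := ⟨n - (j + 1), by omega⟩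
  rw [classifyingMap_apply' SX (topEntries F) k j x hj,
    apply_eq_topEntries_faceZeroIter SX SH F hf k j x hj]

end Faces

section Degeneracies

variable (hd : ∀ (n i : ℕ) (h : i ≤ n) (x : X n),
    F (n + 1) (SX.degen n i h x) = WbarDegen SH i h (F n x))

include hd

lemma degen_topEntries (n i : ℕ) (h : i ≤ n) (x : X (n + 1)) :
    SH.degen n i h (topEntries F n x) =
      topEntries F (n + 1) (SX.degen (n + 1) (i + 1) (by omega) x) := by
  have e := congrFun (hd (n + 1) (i + 1) (by omega) x) ⟨n + 1, by omega⟩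
  rw [wbarDegen_apply_of_gt SH (i + 1) (by omega) (F (n + 1) x) n (by omega) (by omega)] at e
  rw [topEntries, topEntries, e]
  exact SH.degen_congr_idx (by omega) _ _ _

lemma topEntries_degen_zero (n : ℕ) (x : X n) :
    topEntries F n (SX.degen n 0 (Nat.zero_le _) x) = 1 := by
  have e := congrFun (hd n 0 (Nat.zero_le _) x) ⟨n, by omega⟩
  rwa [wbarDegen_apply_of_eq SH 0 (Nat.zero_le _) (F n x) n (by omega) (by omega)] at e

end Degeneracies

end TopEntries

def mcCochainsEquivMapsToWbar (SX : SimpSet X) (SH : SimpGrp H) :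
    mcCochains SX SH ≃ mapsToWbar SX SH where
  toFun ω := ⟨classifyingMap SX ω.1, classifyingMap_face SX SH ω.1 ω.2.1 ω.2.2.1,
    classifyingMap_degen SX SH ω.1 ω.2.2.2.1 ω.2.2.2.2⟩
  invFun F := ⟨topEntries F.1, face_topEntries SX SH F.1 F.2.1,
    face_zero_topEntries SX SH F.1 F.2.1, degen_topEntries SX SH F.1 F.2.2,
    topEntries_degen_zero SX SH F.1 F.2.2⟩
  left_inv ω := Subtype.ext (topEntries_classifyingMap SX ω.1)
  right_inv F := Subtype.ext (classifyingMap_topEntries SX SH F.1 F.2.1)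

/-- `mc(C•(X,H)) ≅ Hom_{sSet}(X, W̄H)`. -/
theorem mc_cochains_iso_maps_to_classifying (SX : SimpSet X) (SH : SimpGrp H) :
    Nonempty (mcCochains SX SH ≃ mapsToWbar SX SH) :=
  ⟨mcCochainsEquivMapsToWbar SX SH⟩
end
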